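/- arXiv:2106.00477 — 3 statements merged into one kernel-verified Lean document; each statement's English description precedes it below -/
import Mathlib

section
/- Let P, Q be discrete probability distributions and ε ∈ ℝ. Then H_{e^ε}(P‖Q) = Σ_{x : Q(x) = 0} P(x) + Σ_{x : Q(x) > 0} max(0, 1 − e^{ε − s(x)})·P(x), where s(x) = log(P(x)/Q(x)). Equivalently, the hockey-stick divergence equals δ(∞) plus the privacy-loss-distribution integral ∫_ε^∞ (1 − e^{ε−s}) ω(s) ds where ω is the PLD of (P, Q). -/
/-- For discrete distributions `P, Q`,
`H_{e^ε}(P‖Q) = Σ_{Q(x)=0} P(x) + Σ_{Q(x)>0} max(0, 1 − e^{ε−s(x)})·P(x)`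
where `s(x) = log(P(x)/Q(x))`. -/
theorem stmt9 {α : Type*} [Countable α] (P Q : α → ℝ)
    (hP : ∀ x, 0 ≤ P x) (hQ : ∀ x, 0 ≤ Q x)
    (hPs : ∑' x, P x = 1) (hQs : ∑' x, Q x = 1) (ε : ℝ) :
    (∑' x, max 0 (P x - Real.exp ε * Q x)) =
      (∑' x, if Q x = 0 then P x else 0) +
        ∑' x, if 0 < Q x then
          max 0 (1 - Real.exp (ε - Real.log (P x / Q x))) * P x else 0 := by
  have hSP : Summable P := by
    by_contra h
    rw [tsum_eq_zero_of_not_summable h] at hPs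
    norm_num at hPs
  have h1 : Summable (fun x => if Q x = 0 then P x else 0) := by
    refine Summable.of_nonneg_of_le (fun x => ?_) (fun x => ?_) hSP
    · split <;> simp [hP x]
    · split <;> simp [hP x]
  have h2 : Summable (fun x => if 0 < Q x then
      max 0 (1 - Real.exp (ε - Real.log (P x / Q x))) * P x else 0) := by
    refine Summable.of_nonneg_of_le (fun x => ?_) (fun x => ?_) hSP
    · split
      · exact mul_nonneg (le_max_left 0 _) (hP x)
      · exact le_refl 0
    split
    · calc max 0 (1 - Real.exp (ε - Real.log (P x / Q x))) * P x
          ≤ 1 * P x := by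
            apply mul_le_mul_of_nonneg_right _ (hP x)
            apply max_le (by norm_num)
            linarith [Real.exp_pos (ε - Real.log (P x / Q x))]
        _ = P x := one_mul _
    · exact hP x
  rw [← Summable.tsum_add h1 h2]
  apply tsum_congr
  intro x
  rcases eq_or_lt_of_le (hQ x) with hq | hq
  · simp [← hq, max_eq_right (hP x)]
  · rw [if_neg hq.ne', if_pos hq, zero_add]
    rcases eq_or_lt_of_le (hP x) with hp | hp
    · simp [← hp, max_eq_left, mul_nonneg (Real.exp_pos ε).le hq.le]
    · rw [Real.exp_sub, Real.exp_log (div_pos hp hq)]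
      rw [max_mul_of_nonneg _ _ (hP x), zero_mul]
      congr 1
      field_simp
end

section
/- Subsampling dominating pair (Proposition 30 of Zhu et al., discrete case): let (P, Q) be a pair of discrete distributions such that H_α(M(X)‖M(X')) ≤ H_α(P‖Q) for all α > 0 and all neighbouring X, X' of size m. Let γ ∈ (0,1]. Then for every α ≥ 1, H_α(γ·P + (1−γ)·Q ‖ Q) = γ·H_{(α−1)/γ + 1}(P‖Q). In particular the mixture pair (γP + (1−γ)Q, Q) dominates the corresponding subsampled mechanism at all α ≥ 1. -/
/-- Subsampling dominating pair identity (discrete case, Prop. 30 of Zhu et al.):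
for discrete distributions `P, Q`, subsampling ratio `γ ∈ (0,1]` and `α ≥ 1`,
`H_α(γ·P + (1−γ)·Q ‖ Q) = γ·H_{(α−1)/γ + 1}(P‖Q)`,
where `H_α(P‖Q) = Σ_x max(0, P(x) − α·Q(x))`. -/
theorem stmt14 {X : Type*} [Countable X] (P Q : X → ℝ)
    (hP : ∀ x, 0 ≤ P x) (hQ : ∀ x, 0 ≤ Q x)
    (hPs : ∑' x, P x = 1) (hQs : ∑' x, Q x = 1)
    (γ : ℝ) (hγ0 : 0 < γ) (hγ1 : γ ≤ 1) (α : ℝ) (hα : 1 ≤ α) :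
    (∑' x, max 0 (γ * P x + (1 - γ) * Q x - α * Q x)) =
      γ * ∑' x, max 0 (P x - ((α - 1) / γ + 1) * Q x) := by
  rw [← tsum_mul_left]
  congr 1
  ext x
  rw [mul_max_of_nonneg _ _ hγ0.le, mul_zero]
  congr 1
  field_simp
  ring
end

section
/- Tight δ(ε) characterisation for discrete mechanisms: a mechanism M on neighbouring datasets X ~ X' is (ε, δ)-DP for all pairs if and only if δ ≥ max_{X~X'} max{ H_{e^ε}(M(X)‖M(X')), H_{e^ε}(M(X')‖M(X)) }, where for discrete distributions H_α(P‖Q) = Σ_x max(0, P(x) − α Q(x)). -/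
/-- Tight `δ(ε)` characterisation for discrete mechanisms: `M` is `(ε, δ)`-DP for all
neighbouring pairs (w.r.t. a symmetric relation `Nb`) iff
`H_{e^ε}(M(X)‖M(X')) ≤ δ` for all neighbouring `X, X'`, where
`H_α(P‖Q) = Σ_x max(0, P(x) − α·Q(x))`. -/
theorem stmt17 {D O : Type*} [Countable O] (Nb : D → D → Prop) (hsymm : Symmetric Nb)
    (M : D → O → ℝ) (hM : ∀ X x, 0 ≤ M X x) (hMsum : ∀ X, Summable (M X))
    (hM1 : ∀ X, ∑' x, M X x = 1) (ε δ : ℝ) (hδ : 0 ≤ δ) :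
    (∀ X X', Nb X X' → ∀ E : Set O,
        (∑' x : E, M X x) ≤ Real.exp ε * (∑' x : E, M X' x) + δ) ↔
      (∀ X X', Nb X X' →
        (∑' x, max 0 (M X x - Real.exp ε * M X' x)) ≤ δ) := by
  set α := Real.exp ε with hα
  have hα0 : 0 < α := Real.exp_pos ε
  -- general facts
  have hf_nonneg : ∀ X X' (x : O), 0 ≤ max 0 (M X x - α * M X' x) := fun _ _ _ => le_max_left _ _
  have hf_le : ∀ X X' (x : O), max 0 (M X x - α * M X' x) ≤ M X x := by
    intro X X' x
    exact max_le (hM X x) (by nlinarith [hM X' x, hM X x, hα0.le])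
  have hf_sum : ∀ X X', Summable (fun x => max 0 (M X x - α * M X' x)) := by
    intro X X'
    exact (hMsum X).of_nonneg_of_le (hf_nonneg X X') (hf_le X X')
  constructor
  · intro h X X' hN
    set E : Set O := {x | α * M X' x < M X x} with hE
    have hind : (fun x => max 0 (M X x - α * M X' x))
        = E.indicator (fun x => M X x - α * M X' x) := by
      funext x
      by_cases hx : x ∈ E
      · rw [Set.indicator_of_mem hx]
        exact max_eq_right (by simp only [hE, Set.mem_setOf_eq] at hx; linarith)
      · rw [Set.indicator_of_notMem hx]
        exact max_eq_left (by simp only [hE, Set.mem_setOf_eq, not_lt] at hx; linarith)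
    have hsub : (∑' x, max 0 (M X x - α * M X' x))
        = ∑' x : E, (M X x - α * M X' x) := by
      rw [hind]
      exact (tsum_subtype E fun x => M X x - α * M X' x).symm
    have hsP : Summable (fun x : E => M X x) := (hMsum X).subtype E
    have hsQ : Summable (fun x : E => α * M X' x) := ((hMsum X').subtype E).mul_left α
    rw [hsub, Summable.tsum_sub hsP hsQ, tsum_mul_left]
    have := h X X' hN E
    linarith
  · intro h X X' hN E
    have hkey := h X X' hN
    have hsP : Summable (fun x : E => M X x) := (hMsum X).subtype E
    have hsQ : Summable (fun x : E => M X' x) := (hMsum X').subtype E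
    have hsF : Summable (fun x : E => max 0 (M X x - α * M X' x)) :=
      (hf_sum X X').subtype E
    have h1 : (∑' x : E, M X x)
        ≤ ∑' x : E, (α * M X' x + max 0 (M X x - α * M X' x)) := by
      apply Summable.tsum_le_tsum _ hsP ((hsQ.mul_left α).add hsF)
      intro x
      have := le_max_right 0 (M X x.1 - α * M X' x.1)
      linarith
    have h2 : (∑' x : E, (α * M X' x + max 0 (M X x - α * M X' x)))
        = α * (∑' x : E, M X' x) + ∑' x : E, max 0 (M X x - α * M X' x) := by
      rw [Summable.tsum_add (hsQ.mul_left α) hsF, tsum_mul_left]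
    have h3 : (∑' x : E, max 0 (M X x - α * M X' x))
        ≤ ∑' x, max 0 (M X x - α * M X' x) := by
      rw [tsum_subtype E fun x => max 0 (M X x - α * M X' x)]
      apply Summable.tsum_le_tsum _ ((hf_sum X X').indicator E) (hf_sum X X')
      intro x
      exact Set.indicator_le_self' (fun x _ => hf_nonneg X X' x) x
    linarith
end
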